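/- arXiv:2312.10514 — 2 statements merged into one kernel-verified Lean document; each statement's English description precedes it below -/
import Mathlib

section
/- Let m ≥ 1 and let (J_k)_{k∈ℕ} be a bounded sequence of positive integers. There exists ε₀ = ε₀(m, sup_k J_k) ∈ (0,1) such that for every ε ∈ (0, ε₀) there exist points y_{k,j} ∈ T^m := (ℝ/2πℤ)^m, for k ∈ ℕ and 1 ≤ j ≤ J_k, with the following properties: (A) the closed balls (for the quotient metric on T^m) of radius 2ε^k centered at y_{k,j} are pairwise disjoint over all distinct pairs (k,j); (B) for every K ∈ ℕ, the Haar measure of the complement in T^m of the union of the closed balls B̄(y_{k,j}, 2ε^k) over k ≤ K, 1 ≤ j ≤ J_k, is at least (1 − Σ_{n=1}^{K} 4^{-n})·(2π)^m; in particular the measure of the complement of the union of all the balls is at least (2/3)·(2π)^m. -/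
/-!
All centres are placed on the diagonal of `T^m`, so disjointness of the balls can be read off a
single coordinate, i.e. on the circle. There level `k` is a run of at most `B` points starting at
`ε ^ k` with spacing `8 ε ^ (k + 1)`; for small `ε` each run ends well before the next level
starts, so all balls are separated. The measure bounds need no disjointness: by the union bound
level `k` covers mass at most `B (4 ε ^ (k + 1)) ^ m ≤ 4⁻¹ ^ (k + 1) (2π) ^ m`.
-/

noncomputable section

open MeasureTheory

instance : Fact (0 < 2 * Real.pi) := ⟨by positivity⟩

/-- The torus `T^m = (ℝ/2πℤ)^m`, with the product (Haar) measure of total mass `(2π)^m`. -/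
abbrev Tm (m : ℕ) := Fin m → AddCircle (2 * Real.pi)

/-- The quotient metric on `T^m` induced by the Euclidean metric on `ℝ^m`:
it decouples coordinatewise, giving `dist(x,y) = √(Σ_i dist_{ℝ/2πℤ}(x_i,y_i)²)`. -/
def distT (m : ℕ) (x y : Tm m) : ℝ :=
  Real.sqrt (∑ i, dist (x i) (y i) ^ 2)

/-- The closed ball in `T^m` for the quotient (Euclidean) metric. -/
def cball (m : ℕ) (y : Tm m) (r : ℝ) : Set (Tm m) := {x | distT m x y ≤ r}

open Real

/-- Level `k` occupies `[ε ^ k, ε ^ k (1 + 8 B ε)]`, with neighbouring points `8 ε ^ (k + 1)`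
apart, twice the sum of the radii `2 ε ^ (k + 1)` of their balls. -/
def centerPos (ε : ℝ) (k j : ℕ) : ℝ := ε ^ k + 8 * j * ε ^ (k + 1)

lemma centerPos_nonneg {ε : ℝ} (hε : 0 < ε) (k j : ℕ) : 0 ≤ centerPos ε k j := by
  unfold centerPos; positivity

lemma centerPos_le_two {ε : ℝ} {B k j : ℕ} (hε : 0 < ε)
    (hεB : 16 * ((B : ℝ) + 1) * ε ≤ 1) (hj : j < B) : centerPos ε k j ≤ 2 := by
  have hε1 : ε ≤ 1 := by nlinarith
  have hjB : (j : ℝ) ≤ B := by exact_mod_cast hj.le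
  have hpow : ε ^ (k + 1) ≤ ε := pow_le_of_le_one hε.le hε1 k.succ_ne_zero
  have := pow_le_one₀ hε.le hε1 (n := k)
  unfold centerPos
  nlinarith

lemma centerPos_add_lt_of_lt_level {ε : ℝ} {B k k' j j' : ℕ} (hε : 0 < ε)
    (hεB : 16 * ((B : ℝ) + 1) * ε ≤ 1) (hk : k < k') (hj' : j' < B) :
    centerPos ε k' j' + 4 * ε ^ (k + 1) < centerPos ε k j := by
  have hε1 : ε ≤ 1 := by nlinarith
  have hj'B : (j' : ℝ) ≤ B := by exact_mod_cast hj'.le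
  have hlower : ε ^ k' * (1 + 8 * j' * ε) ≤ ε ^ (k + 1) * (1 + 8 * B * ε) :=
    mul_le_mul (pow_le_pow_of_le_one hε.le hε1 hk) (by gcongr) (by positivity) (by positivity)
  calc centerPos ε k' j' + 4 * ε ^ (k + 1)
      = ε ^ k' * (1 + 8 * j' * ε) + 4 * ε ^ (k + 1) := by unfold centerPos; ring
    _ ≤ ε ^ k * (ε * (5 + 8 * B * ε)) := by rw [pow_succ] at hlower ⊢; linarith
    _ < ε ^ k * 1 := mul_lt_mul_of_pos_left (by nlinarith) (pow_pos hε k)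
    _ ≤ centerPos ε k j := by
        rw [mul_one, centerPos]; exact le_add_of_nonneg_right (by positivity)

lemma centerPos_add_lt_of_lt_index {ε : ℝ} {k j j' : ℕ} (hε : 0 < ε) (hj : j < j') :
    centerPos ε k j + 4 * ε ^ (k + 1) < centerPos ε k j' := by
  have hjj' : (j : ℝ) + 1 ≤ j' := by exact_mod_cast hj
  unfold centerPos
  nlinarith [pow_pos hε (k + 1)]

lemma add_lt_abs_sub_centerPos {ε : ℝ} {B k k' j j' : ℕ} (hε : 0 < ε)
    (hεB : 16 * ((B : ℝ) + 1) * ε ≤ 1) (hj : j < B) (hj' : j' < B)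
    (hne : k ≠ k' ∨ j ≠ j') :
    2 * ε ^ (k + 1) + 2 * ε ^ (k' + 1) < |centerPos ε k j - centerPos ε k' j'| := by
  have hε1 : ε ≤ 1 := by nlinarith
  rcases lt_trichotomy k k' with hk | rfl | hk
  · have := centerPos_add_lt_of_lt_level (j := j) hε hεB hk hj'
    have : ε ^ (k' + 1) ≤ ε ^ (k + 1) := pow_le_pow_of_le_one hε.le hε1 (by omega)
    exact lt_abs.mpr (Or.inl (by linarith))
  · obtain hjj' | hjj' := (hne.resolve_left (absurd rfl)).lt_or_gt
    · have := centerPos_add_lt_of_lt_index (k := k) hε hjj'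
      exact lt_abs.mpr (Or.inr (by linarith))
    · have := centerPos_add_lt_of_lt_index (k := k) hε hjj'
      exact lt_abs.mpr (Or.inl (by linarith))
  · have := centerPos_add_lt_of_lt_level (j := j') hε hεB hk hj
    have : ε ^ (k + 1) ≤ ε ^ (k' + 1) := pow_le_pow_of_le_one hε.le hε1 (by omega)
    exact lt_abs.mpr (Or.inr (by linarith))

lemma AddCircle.dist_coe_eq_abs_sub {p : ℝ} [Fact (0 < p)] {u v : ℝ} (h : |u - v| ≤ p / 2) :
    dist (u : AddCircle p) (v : AddCircle p) = |u - v| := by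
  rw [dist_eq_norm, ← AddCircle.coe_sub,
    AddCircle.norm_coe_eq_abs_iff _ (Fact.out : 0 < p).ne', abs_of_pos (Fact.out : 0 < p)]
  exact h

lemma dist_apply_le_distT {m : ℕ} (x y : Tm m) (i : Fin m) : dist (x i) (y i) ≤ distT m x y :=
  Real.le_sqrt_of_sq_le <|
    Finset.single_le_sum (f := fun j => dist (x j) (y j) ^ 2) (fun _ _ => sq_nonneg _)
      (Finset.mem_univ i)

lemma disjoint_cball_of_lt_dist_apply {m : ℕ} {x y : Tm m} {r s : ℝ} (i : Fin m)
    (h : r + s < dist (x i) (y i)) : Disjoint (cball m x r) (cball m y s) := by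
  refine Set.disjoint_left.mpr fun z hzx hzy => h.not_ge ?_
  calc dist (x i) (y i) ≤ dist (z i) (x i) + dist (z i) (y i) := dist_triangle_left _ _ _
    _ ≤ r + s := add_le_add ((dist_apply_le_distT z x i).trans hzx)
        ((dist_apply_le_distT z y i).trans hzy)

lemma volume_cball_le {m : ℕ} (y : Tm m) {r : ℝ} (hr : 0 ≤ r) :
    volume (cball m y r) ≤ ENNReal.ofReal ((2 * r) ^ m) := by
  have hsub : cball m y r ⊆ Set.univ.pi fun i => Metric.closedBall (y i) r :=
    fun x hx i _ => (dist_apply_le_distT x y i).trans hx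
  calc volume (cball m y r) ≤ ∏ i, volume (Metric.closedBall (y i) r) := by
        rw [← volume_pi_pi]; exact measure_mono hsub
    _ ≤ ∏ _i : Fin m, ENNReal.ofReal (2 * r) := by
        gcongr with i
        rw [AddCircle.volume_closedBall]
        exact ENNReal.ofReal_le_ofReal (min_le_right _ _)
    _ = ENNReal.ofReal ((2 * r) ^ m) := by
        rw [Finset.prod_const, Finset.card_fin, ENNReal.ofReal_pow (by positivity)]

lemma volume_univ_Tm (m : ℕ) :
    volume (Set.univ : Set (Tm m)) = ENNReal.ofReal ((2 * π) ^ m) := by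
  rw [← Set.pi_univ, volume_pi_pi, AddCircle.measure_univ, Finset.prod_const, Finset.card_fin,
    ENNReal.ofReal_pow (by positivity)]

lemma ofReal_sub_le_measure_compl {α : Type*} [MeasurableSpace α] {μ : Measure α} {s : Set α}
    {a b : ℝ} (huniv : μ Set.univ = ENNReal.ofReal a) (hs : μ s ≤ ENNReal.ofReal b)
    (hb : 0 ≤ b) :
    ENNReal.ofReal (a - b) ≤ μ sᶜ := by
  rw [ENNReal.ofReal_sub _ hb, ← huniv, tsub_le_iff_left]
  exact (measure_univ_le_add_compl s).trans (add_le_add_left hs _)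

lemma measure_iUnion_le_ofReal_of_hasSum {α : Type*} [MeasurableSpace α] {μ : Measure α}
    {s : ℕ → Set α} {c : ℕ → ℝ} {a : ℝ} (hc : HasSum c a) (hc0 : ∀ n, 0 ≤ c n)
    (hs : ∀ n, μ (s n) ≤ ENNReal.ofReal (c n)) : μ (⋃ n, s n) ≤ ENNReal.ofReal a :=
  calc μ (⋃ n, s n) ≤ ∑' n, μ (s n) := measure_iUnion_le s
    _ ≤ ∑' n, ENNReal.ofReal (c n) := ENNReal.tsum_le_tsum hs
    _ = ENNReal.ofReal a := by rw [← ENNReal.ofReal_tsum_of_nonneg hc0 hc.summable, hc.tsum_eq]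

lemma measure_biUnion_range_le_ofReal_sum {α : Type*} [MeasurableSpace α] {μ : Measure α}
    {s : ℕ → Set α} {c : ℕ → ℝ} (hc0 : ∀ n, 0 ≤ c n)
    (hs : ∀ n, μ (s n) ≤ ENNReal.ofReal (c n)) (K : ℕ) :
    μ (⋃ n ∈ Finset.range K, s n) ≤ ENNReal.ofReal (∑ n ∈ Finset.range K, c n) :=
  calc μ (⋃ n ∈ Finset.range K, s n) ≤ ∑ n ∈ Finset.range K, μ (s n) :=
        measure_biUnion_finset_le _ s
    _ ≤ ∑ n ∈ Finset.range K, ENNReal.ofReal (c n) := Finset.sum_le_sum fun n _ => hs n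
    _ = ENNReal.ofReal (∑ n ∈ Finset.range K, c n) :=
        (ENNReal.ofReal_sum_of_nonneg fun n _ => hc0 n).symm

lemma volume_iUnion_cball_le {m n : ℕ} (y : Fin n → Tm m) {r : ℝ} (hr : 0 ≤ r) :
    volume (⋃ j, cball m (y j) r) ≤ ENNReal.ofReal (n * (2 * r) ^ m) :=
  calc volume (⋃ j, cball m (y j) r) ≤ ∑ j, volume (cball m (y j) r) :=
        measure_iUnion_fintype_le _ _
    _ ≤ ∑ _j : Fin n, ENNReal.ofReal ((2 * r) ^ m) :=
        Finset.sum_le_sum fun j _ => volume_cball_le (y j) hr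
    _ = ENNReal.ofReal (n * (2 * r) ^ m) := by
        rw [Finset.sum_const, Finset.card_fin, nsmul_eq_mul, ENNReal.ofReal_mul (by positivity),
          ENNReal.ofReal_natCast]

lemma natCast_mul_pow_le_inv_four_pow {ε : ℝ} {B n m : ℕ} (hε : 0 < ε)
    (hεB : 16 * ((B : ℝ) + 1) * ε ≤ 1) (hm : 1 ≤ m) (hn : n ≤ B) (k : ℕ) :
    n * (2 * (2 * ε ^ (k + 1))) ^ m ≤ 4⁻¹ ^ (k + 1) * (2 * π) ^ m := by
  have hnB : (n : ℝ) ≤ B := by exact_mod_cast hn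
  have hεk : ε ^ k ≤ 4⁻¹ ^ k := pow_le_pow_left₀ hε.le (by nlinarith) k
  have hsmall : 2 * (2 * ε ^ (k + 1)) ≤ 1 := by
    have := pow_le_one₀ hε.le (by nlinarith) (n := k)
    rw [pow_succ]; nlinarith
  calc n * (2 * (2 * ε ^ (k + 1))) ^ m
      ≤ B * (2 * (2 * ε ^ (k + 1))) :=
        mul_le_mul hnB (pow_le_of_le_one (by positivity) hsmall (by omega)) (by positivity)
          (by positivity)
    _ = 4 * (B * ε) * ε ^ k := by ring
    _ ≤ 4 * 16⁻¹ * 4⁻¹ ^ k := by gcongr; nlinarith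
    _ = 4⁻¹ ^ (k + 1) * 1 := by ring
    _ ≤ 4⁻¹ ^ (k + 1) * (2 * π) ^ m := by
        gcongr; exact one_le_pow₀ (by linarith [pi_gt_three])

lemma volume_iUnion_cball_level_le {ε : ℝ} {B n m : ℕ} (hε : 0 < ε)
    (hεB : 16 * ((B : ℝ) + 1) * ε ≤ 1) (hm : 1 ≤ m) (hn : n ≤ B) (y : Fin n → Tm m)
    (k : ℕ) :
    volume (⋃ j, cball m (y j) (2 * ε ^ (k + 1))) ≤
      ENNReal.ofReal (4⁻¹ ^ (k + 1) * (2 * π) ^ m) :=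
  (volume_iUnion_cball_le y (by positivity)).trans
    (ENNReal.ofReal_le_ofReal (natCast_mul_pow_le_inv_four_pow hε hεB hm hn k))

lemma hasSum_inv_four_pow_succ_mul (T : ℝ) :
    HasSum (fun k : ℕ => (4 : ℝ)⁻¹ ^ (k + 1) * T) (T / 3) := by
  have hf : (fun k : ℕ => (4 : ℝ)⁻¹ ^ (k + 1) * T) = fun k => 4⁻¹ * T * 4⁻¹ ^ k := by
    ext k; ring
  rw [hf, show T / 3 = 4⁻¹ * T * (1 - 4⁻¹)⁻¹ by norm_num; ring]
  exact (hasSum_geometric_of_lt_one (by norm_num) (by norm_num)).mul_left _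

lemma ofReal_le_volume_outside_cball_lt {m B : ℕ} {J : ℕ → ℕ} {ε : ℝ} (hm : 1 ≤ m)
    (hJB : ∀ k, J k ≤ B) (hε : 0 < ε) (hεB : 16 * ((B : ℝ) + 1) * ε ≤ 1)
    (y : (k : ℕ) → Fin (J k) → Tm m) (K : ℕ) :
    ENNReal.ofReal ((1 - ∑ i ∈ Finset.range K, ((4 : ℝ)⁻¹) ^ (i + 1)) * (2 * π) ^ m)
      ≤ volume {x : Tm m | ∀ k < K, ∀ j : Fin (J k),
          x ∉ cball m (y k j) (2 * ε ^ (k + 1))} := by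
  have hset : {x : Tm m | ∀ k < K, ∀ j : Fin (J k), x ∉ cball m (y k j) (2 * ε ^ (k + 1))} =
      (⋃ k ∈ Finset.range K, ⋃ j, cball m (y k j) (2 * ε ^ (k + 1)))ᶜ := by
    ext x; simp
  rw [hset, sub_mul, one_mul, Finset.sum_mul]
  exact ofReal_sub_le_measure_compl (volume_univ_Tm m)
    (measure_biUnion_range_le_ofReal_sum (fun k => by positivity)
      (fun k => volume_iUnion_cball_level_le hε hεB hm (hJB k) (y k) k) K)
    (Finset.sum_nonneg fun k _ => by positivity)

lemma ofReal_le_volume_outside_cball {m B : ℕ} {J : ℕ → ℕ} {ε : ℝ} (hm : 1 ≤ m)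
    (hJB : ∀ k, J k ≤ B) (hε : 0 < ε) (hεB : 16 * ((B : ℝ) + 1) * ε ≤ 1)
    (y : (k : ℕ) → Fin (J k) → Tm m) :
    ENNReal.ofReal ((2 / 3) * (2 * π) ^ m)
      ≤ volume {x : Tm m | ∀ (k : ℕ) (j : Fin (J k)),
          x ∉ cball m (y k j) (2 * ε ^ (k + 1))} := by
  have hset : {x : Tm m | ∀ (k : ℕ) (j : Fin (J k)), x ∉ cball m (y k j) (2 * ε ^ (k + 1))} =
      (⋃ k, ⋃ j, cball m (y k j) (2 * ε ^ (k + 1)))ᶜ := by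
    ext x; simp
  rw [hset, show 2 / 3 * (2 * π) ^ m = (2 * π) ^ m - (2 * π) ^ m / 3 by ring]
  exact ofReal_sub_le_measure_compl (volume_univ_Tm m)
    (measure_iUnion_le_ofReal_of_hasSum (hasSum_inv_four_pow_succ_mul _)
      (fun k => by positivity) (fun k => volume_iUnion_cball_level_le hε hεB hm (hJB k) (y k) k))
    (by positivity)

-- The paper's level `k ≥ 1` is written `k + 1` here.
theorem exists_ball_centers_general
    (m : ℕ) (hm : 1 ≤ m) (J : ℕ → ℕ) (B : ℕ) (hJB : ∀ k, J k ≤ B) :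
    ∃ ε₀ : ℝ, 0 < ε₀ ∧ ε₀ < 1 ∧
      ∀ ε : ℝ, 0 < ε → ε < ε₀ →
        ∃ y : (k : ℕ) → Fin (J k) → Tm m,
          (∀ (k k' : ℕ) (j : Fin (J k)) (j' : Fin (J k')), (k ≠ k' ∨ (j : ℕ) ≠ (j' : ℕ)) →
            Disjoint (cball m (y k j) (2 * ε ^ (k + 1))) (cball m (y k' j') (2 * ε ^ (k' + 1)))) ∧
          (∀ K : ℕ,
            ENNReal.ofReal ((1 - ∑ i ∈ Finset.range K, ((4 : ℝ)⁻¹) ^ (i + 1)) * (2 * Real.pi) ^ m)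
              ≤ volume {x : Tm m | ∀ k < K, ∀ j : Fin (J k), x ∉ cball m (y k j) (2 * ε ^ (k + 1))}) ∧
          ENNReal.ofReal ((2 / 3) * (2 * Real.pi) ^ m)
              ≤ volume {x : Tm m | ∀ (k : ℕ) (j : Fin (J k)), x ∉ cball m (y k j) (2 * ε ^ (k + 1))} := by
  have hB : (0 : ℝ) < 16 * (B + 1) := by positivity
  refine ⟨(16 * ((B : ℝ) + 1))⁻¹, by positivity,
    inv_lt_one_of_one_lt₀ (by linarith [B.cast_nonneg (α := ℝ)]), fun ε hε hεε₀ => ?_⟩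
  have hεB : 16 * ((B : ℝ) + 1) * ε ≤ 1 := ((lt_inv_mul_iff₀ hB).mp (by rwa [mul_one])).le
  let y : (k : ℕ) → Fin (J k) → Tm m := fun k j _ => (centerPos ε k j : AddCircle (2 * π))
  refine ⟨y, fun k k' j j' hne => ?_, ofReal_le_volume_outside_cball_lt hm hJB hε hεB y,
    ofReal_le_volume_outside_cball hm hJB hε hεB y⟩
  have hj := j.2.trans_le (hJB k)
  have hj' := j'.2.trans_le (hJB k')
  refine disjoint_cball_of_lt_dist_apply ⟨0, hm⟩ ?_
  rw [AddCircle.dist_coe_eq_abs_sub]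
  · exact add_lt_abs_sub_centerPos hε hεB hj hj' hne
  · have := centerPos_le_two (k := k) hε hεB hj
    have := centerPos_le_two (k := k') hε hεB hj'
    refine abs_sub_le_of_nonneg_of_le (centerPos_nonneg hε _ _) ?_ (centerPos_nonneg hε _ _) ?_ <;>
      linarith [pi_gt_three]

/-- choice of the centers `y_{k,j} ∈ T^m`. For every `m ≥ 1` and every
bounded sequence `(J_k)` of positive integers there is `ε₀ ∈ (0,1)` such that for all
`ε ∈ (0,ε₀)` one can pick points `y_{k,j} ∈ T^m` (`k ∈ ℕ`, `1 ≤ j ≤ J_k`; the paper's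
index `k ≥ 1` is written `k+1` here) whose closed balls of radius `2ε^{k+1}` are pairwise
disjoint, with quantitative measure bounds on the complement of the balls.  -/
theorem exists_ball_centers
    (m : ℕ) (hm : 1 ≤ m) (J : ℕ → ℕ) (hJ1 : ∀ k, 1 ≤ J k) (B : ℕ) (hJB : ∀ k, J k ≤ B) :
    ∃ ε₀ : ℝ, 0 < ε₀ ∧ ε₀ < 1 ∧
      ∀ ε : ℝ, 0 < ε → ε < ε₀ →
        ∃ y : (k : ℕ) → Fin (J k) → Tm m,
          (∀ (k k' : ℕ) (j : Fin (J k)) (j' : Fin (J k')), (k ≠ k' ∨ (j : ℕ) ≠ (j' : ℕ)) →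
            Disjoint (cball m (y k j) (2 * ε ^ (k + 1))) (cball m (y k' j') (2 * ε ^ (k' + 1)))) ∧
          (∀ K : ℕ,
            ENNReal.ofReal ((1 - ∑ i ∈ Finset.range K, ((4 : ℝ)⁻¹) ^ (i + 1)) * (2 * Real.pi) ^ m)
              ≤ volume {x : Tm m | ∀ k < K, ∀ j : Fin (J k), x ∉ cball m (y k j) (2 * ε ^ (k + 1))}) ∧
          ENNReal.ofReal ((2 / 3) * (2 * Real.pi) ^ m)
              ≤ volume {x : Tm m | ∀ (k : ℕ) (j : Fin (J k)), x ∉ cball m (y k j) (2 * ε ^ (k + 1))} :=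
  exists_ball_centers_general m hm J B hJB
end
end

section
/- Let d, m ≥ 1 and n ∈ ℕ. Let (f_k)_{k∈ℕ} be a sequence of C^n functions ℝ^d → ℝ^m whose supports are pairwise disjoint and form a locally finite family of closed sets, and assume sup_k ‖f_k‖_{j,∞} < ∞ for every 0 ≤ j ≤ n. Then the pointwise sum f := Σ_{k∈ℕ} f_k is well defined, of class C^n on ℝ^d, and ‖f‖_{j,∞} = sup_k ‖f_k‖_{j,∞} for every 0 ≤ j ≤ n. -/
noncomputable section

/-- The convective derivative `(f·∇)g`, whose `i`-th component is `Σ_j f_j ∂_{x_j} g_i`. -/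
def conv {ι : Type*} [Fintype ι] [DecidableEq ι]
    (f g : EuclideanSpace ℝ ι → EuclideanSpace ℝ ι) (x : EuclideanSpace ℝ ι) :
    EuclideanSpace ℝ ι :=
  ∑ j, f x j • fderiv ℝ g x (EuclideanSpace.single j 1)

/-- The divergence `div f = Σ_j ∂_{x_j} f_j`. -/
def diverg {ι : Type*} [Fintype ι] [DecidableEq ι]
    (f : EuclideanSpace ℝ ι → EuclideanSpace ℝ ι) (x : EuclideanSpace ℝ ι) : ℝ :=
  ∑ j, fderiv ℝ f x (EuclideanSpace.single j 1) j

/-- The gradient `∇p` of a scalar function. -/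
def grad {ι : Type*} [Fintype ι] [DecidableEq ι] (p : EuclideanSpace ℝ ι → ℝ)
    (x : EuclideanSpace ℝ ι) : EuclideanSpace ℝ ι :=
  (EuclideanSpace.equiv ι ℝ).symm (fun i => fderiv ℝ p x (EuclideanSpace.single i 1))

/-- The seminorm `‖f‖_{N,∞} = sup_x ‖D^N f(x)‖`. -/
def snorm {X Y : Type*} [NormedAddCommGroup X] [NormedSpace ℝ X] [NormedAddCommGroup Y]
    [NormedSpace ℝ Y] (N : ℕ) (f : X → Y) : ℝ := ⨆ x, ‖iteratedFDeriv ℝ N f x‖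

/-!
Near any point at most one `f k` is nonzero: if `x ∈ tsupport (f k)`, then by disjointness `x`
avoids the union of the other supports, which is closed by local finiteness, so the sum agrees
with `f k` on a neighbourhood of `x`. Smoothness and the iterated derivatives of the sum at `x` are
therefore those of a single `f k`, which gives both inequalities between the seminorms.
-/

open Filter Function Topology

section LocallyFiniteSum

variable {ι X M : Type*} [TopologicalSpace X] [AddCommMonoid M] [TopologicalSpace M]
  {f : ι → X → M}

theorem summable_of_pairwise_disjoint_tsupport
    (hdisj : Pairwise (Disjoint on fun i => tsupport (f i))) (x : X) :
    Summable fun i => f i x := by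
  refine summable_of_hasFiniteSupport (Set.Subsingleton.finite fun i hi j hj => ?_)
  by_contra hij
  exact Set.disjoint_left.1 (hdisj hij) (subset_tsupport _ hi) (subset_tsupport _ hj)

theorem LocallyFinite.tsum_eventuallyEq (hlf : LocallyFinite fun i => tsupport (f i))
    {k : ι} {x : X} (hk : ∀ i ≠ k, x ∉ tsupport (f i)) :
    (fun y => ∑' i, f i y) =ᶠ[𝓝 x] f k := by
  have hclosed : IsClosed (⋃ i : {i // i ≠ k}, tsupport (f i)) :=
    (hlf.comp_injective Subtype.val_injective).isClosed_iUnion fun _ => isClosed_tsupport _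
  have hx : x ∉ ⋃ i : {i // i ≠ k}, tsupport (f i) := by
    simp only [Set.mem_iUnion, not_exists]
    exact fun i => hk i i.2
  filter_upwards [hclosed.isOpen_compl.mem_nhds hx] with y hy
  refine tsum_eq_single k fun i hi => image_eq_zero_of_notMem_tsupport fun hyi => hy ?_
  exact Set.mem_iUnion.2 ⟨⟨i, hi⟩, hyi⟩

theorem tsum_eventuallyEq_of_mem_tsupport
    (hdisj : Pairwise (Disjoint on fun i => tsupport (f i)))
    (hlf : LocallyFinite fun i => tsupport (f i)) {k : ι} {x : X} (hx : x ∈ tsupport (f k)) :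
    (fun y => ∑' i, f i y) =ᶠ[𝓝 x] f k :=
  hlf.tsum_eventuallyEq fun _ hi hxi => Set.disjoint_left.1 (hdisj hi) hxi hx

theorem exists_tsum_eventuallyEq [Nonempty ι]
    (hdisj : Pairwise (Disjoint on fun i => tsupport (f i)))
    (hlf : LocallyFinite fun i => tsupport (f i)) (x : X) :
    ∃ k, (fun y => ∑' i, f i y) =ᶠ[𝓝 x] f k := by
  by_cases hx : ∃ k, x ∈ tsupport (f k)
  · obtain ⟨k, hk⟩ := hx
    exact ⟨k, tsum_eventuallyEq_of_mem_tsupport hdisj hlf hk⟩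
  · push Not at hx
    exact ⟨Classical.arbitrary ι, hlf.tsum_eventuallyEq fun i _ => hx i⟩

end LocallyFiniteSum

theorem contDiff_tsum_of_pairwise_disjoint_tsupport {𝕜 ι X Y : Type*} [NontriviallyNormedField 𝕜]
    [NormedAddCommGroup X] [NormedSpace 𝕜 X] [NormedAddCommGroup Y] [NormedSpace 𝕜 Y]
    [Nonempty ι] {f : ι → X → Y} {n : WithTop ℕ∞}
    (hdisj : Pairwise (Disjoint on fun i => tsupport (f i)))
    (hlf : LocallyFinite fun i => tsupport (f i)) (hf : ∀ i, ContDiff 𝕜 n (f i)) :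
    ContDiff 𝕜 n fun x => ∑' i, f i x :=
  contDiff_iff_contDiffAt.2 fun x =>
    let ⟨k, hk⟩ := exists_tsum_eventuallyEq hdisj hlf x
    (hf k).contDiffAt.congr_of_eventuallyEq hk

section Seminorm

variable {X Y : Type*} [NormedAddCommGroup X] [NormedSpace ℝ X] [NormedAddCommGroup Y]
  [NormedSpace ℝ Y]

theorem snorm_nonneg (N : ℕ) (f : X → Y) : 0 ≤ snorm N f :=
  Real.iSup_nonneg fun _ => norm_nonneg _

theorem norm_iteratedFDeriv_le_snorm {N : ℕ} {f : X → Y}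
    (hf : BddAbove (Set.range fun x => ‖iteratedFDeriv ℝ N f x‖)) (x : X) :
    ‖iteratedFDeriv ℝ N f x‖ ≤ snorm N f :=
  le_ciSup hf x

theorem snorm_tsum_of_pairwise_disjoint_tsupport {ι : Type*} [Nonempty ι] {f : ι → X → Y}
    {N : ℕ} (hdisj : Pairwise (Disjoint on fun i => tsupport (f i)))
    (hlf : LocallyFinite fun i => tsupport (f i))
    (hf : ∀ i, BddAbove (Set.range fun x => ‖iteratedFDeriv ℝ N (f i) x‖))
    (hsup : BddAbove (Set.range fun i => snorm N (f i))) :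
    snorm N (fun x => ∑' i, f i x) = ⨆ i, snorm N (f i) := by
  have hle : ∀ x, ‖iteratedFDeriv ℝ N (fun x => ∑' i, f i x) x‖ ≤ ⨆ i, snorm N (f i) := by
    intro x
    obtain ⟨k, hk⟩ := exists_tsum_eventuallyEq hdisj hlf x
    rw [(hk.iteratedFDeriv ℝ N).eq_of_nhds]
    exact (norm_iteratedFDeriv_le_snorm (hf k) x).trans (le_ciSup hsup k)
  refine le_antisymm (ciSup_le hle) (ciSup_le fun k => ciSup_le fun x => ?_)
  by_cases hx : x ∈ tsupport (f k)
  · rw [← ((tsum_eventuallyEq_of_mem_tsupport hdisj hlf hx).iteratedFDeriv ℝ N).eq_of_nhds]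
    exact norm_iteratedFDeriv_le_snorm ⟨_, Set.forall_mem_range.2 hle⟩ x
  · rw [((notMem_tsupport_iff_eventuallyEq.1 hx).iteratedFDeriv ℝ N).eq_of_nhds,
      iteratedFDeriv_zero, Pi.zero_apply, norm_zero]
    exact snorm_nonneg N _

end Seminorm

theorem sum_of_disjointly_supported_general
    (d m n : ℕ)
    (f : ℕ → EuclideanSpace ℝ (Fin d) → EuclideanSpace ℝ (Fin m))
    (hreg : ∀ k, ContDiff ℝ (n : ℕ∞) (f k))
    (hdisj : ∀ k k', k ≠ k' → Disjoint (tsupport (f k)) (tsupport (f k')))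
    (hlf : LocallyFinite (fun k => tsupport (f k)))
    (hb1 : ∀ k, ∀ j ≤ n, BddAbove (Set.range fun x => ‖iteratedFDeriv ℝ j (f k) x‖))
    (hb2 : ∀ j ≤ n, BddAbove (Set.range fun k => snorm j (f k))) :
    (∀ x, Summable (fun k => f k x)) ∧
    ContDiff ℝ (n : ℕ∞) (fun x => ∑' k, f k x) ∧
    (∀ j ≤ n, snorm j (fun x => ∑' k, f k x) = ⨆ k, snorm j (f k)) :=
  ⟨summable_of_pairwise_disjoint_tsupport hdisj,
    contDiff_tsum_of_pairwise_disjoint_tsupport hdisj hlf hreg,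
    fun j hj => snorm_tsum_of_pairwise_disjoint_tsupport hdisj hlf (fun k => hb1 k j hj) (hb2 j hj)⟩

/-- a sum `Σ_k f_k` of `C^n` functions whose supports are pairwise
disjoint and locally finite, with uniformly bounded seminorms, is a well-defined `C^n`
function with `‖Σ_k f_k‖_{j,∞} = sup_k ‖f_k‖_{j,∞}` for all `j ≤ n`. -/
theorem sum_of_disjointly_supported
    (d m n : ℕ) (hd : 1 ≤ d) (hm : 1 ≤ m)
    (f : ℕ → EuclideanSpace ℝ (Fin d) → EuclideanSpace ℝ (Fin m))
    (hreg : ∀ k, ContDiff ℝ (n : ℕ∞) (f k))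
    (hdisj : ∀ k k', k ≠ k' → Disjoint (tsupport (f k)) (tsupport (f k')))
    (hlf : LocallyFinite (fun k => tsupport (f k)))
    (hb1 : ∀ k, ∀ j ≤ n, BddAbove (Set.range fun x => ‖iteratedFDeriv ℝ j (f k) x‖))
    (hb2 : ∀ j ≤ n, BddAbove (Set.range fun k => snorm j (f k))) :
    (∀ x, Summable (fun k => f k x)) ∧
    ContDiff ℝ (n : ℕ∞) (fun x => ∑' k, f k x) ∧
    (∀ j ≤ n, snorm j (fun x => ∑' k, f k x) = ⨆ k, snorm j (f k)) :=
  sum_of_disjointly_supported_general d m n f hreg hdisj hlf hb1 hb2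
end
end
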